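/- arXiv:2003.12590 — 5 statements merged into one kernel-verified Lean document; each statement's English description precedes it below -/
import Mathlib

section
/- Let G and H be finite simple graphs. Then hom(F,G) = hom(F,H) for every finite simple graph F if and only if G and H are isomorphic. -/
/-- The number of graph homomorphisms from `F` to `G`. -/
noncomputable def homCount {α β : Type*} (F : SimpleGraph α) (G : SimpleGraph β) : ℕ :=
  Nat.card (F →g G)

/-!
Lovász's argument. Sort the homomorphisms `F → G` by their kernel `s`, a partition of `V(F)`.
If an edge of `F` lies inside a class of `s` there are none; otherwise they are exactly the
injective homomorphisms from the quotient graph `F / s = F.map (Quotient.mk s)`, precomposed with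
the projection. Hence `hom(F, G) = inj(F, G) + ∑_{s ≠ ⊥} inj(F / s, G)`, and as `F / s` has fewer
vertices than `F`, induction on `|V(F)|` shows that equal homomorphism counts force equal counts
of injective homomorphisms. Taking `F = G` and `F = H` yields injective homomorphisms `G → H` and
`H → G`; comparing vertex and edge counts, the first one is an isomorphism.
-/

open Function

namespace SimpleGraph

variable {V W α β : Type*} {F : SimpleGraph V} {G : SimpleGraph α} {H : SimpleGraph β}

instance _root_.Setoid.instFinite [Finite V] : Finite (Setoid V) :=
  Finite.of_injective (fun s : Setoid V => ⇑s) fun _ _ => Setoid.eq_iff_rel_eq.2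

instance Copy.instFinite [Finite V] [Finite α] : Finite (F.Copy G) :=
  Finite.of_injective Copy.toHom fun _ _ h => Copy.ext (DFunLike.congr_fun h :)

lemma _root_.Setoid.card_quotient_lt [Finite V] {s : Setoid V} (hs : s ≠ ⊥) :
    Nat.card (Quotient s) < Nat.card V := by
  by_contra! hle
  have hinj := ((Quotient.mk_surjective (s := s)).bijective_of_nat_card_le hle).1
  exact hs (Setoid.ker_mk_eq s ▸ Setoid.ker_eq_bot_iff.2 hinj)

lemma homCount_congr_left {F' : SimpleGraph W} (e : F ≃g F') (G : SimpleGraph α) :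
    homCount F G = homCount F' G :=
  Nat.card_congr
    { toFun f := f.comp e.symm.toHom
      invFun f := f.comp e.toHom
      left_inv f := by ext; simp
      right_inv f := by ext; simp }

lemma homCount_congr_right (F : SimpleGraph V) (e : G ≃g H) : homCount F G = homCount F H :=
  Nat.card_congr
    { toFun f := e.toHom.comp f
      invFun f := e.symm.toHom.comp f
      left_inv f := by ext; simp
      right_inv f := by ext; simp }

lemma homCount_eq_of_forall_fin
    (h : ∀ (n : ℕ) (F : SimpleGraph (Fin n)), homCount F G = homCount F H)
    [Finite V] (F : SimpleGraph V) : homCount F G = homCount F H := by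
  let e := Iso.map (Finite.equivFin V) F
  rw [homCount_congr_left e, homCount_congr_left e, h]

abbrev HomWithKer (F : SimpleGraph V) (G : SimpleGraph α) (s : Setoid V) : Type _ :=
  {f : F →g G // Setoid.ker f = s}

lemma homCount_eq_sum_card_homWithKer [Fintype (Setoid V)] [Finite V] [Finite α]
    (F : SimpleGraph V) (G : SimpleGraph α) :
    homCount F G = ∑ s : Setoid V, Nat.card (HomWithKer F G s) := by
  rw [homCount, ← Nat.card_congr (Equiv.sigmaFiberEquiv fun f : F →g G => Setoid.ker f),
    Nat.card_sigma]

def homWithKerBotEquivCopy : HomWithKer F G ⊥ ≃ F.Copy G where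
  toFun f := f.1.toCopy (Setoid.ker_eq_bot_iff.1 f.2)
  invFun f := ⟨f.toHom, Setoid.ker_eq_bot_iff.2 f.injective⟩
  left_inv _ := rfl
  right_inv _ := rfl

lemma isEmpty_homWithKer_of_adj {s : Setoid V} {u v : V} (huv : F.Adj u v) (hs : s u v) :
    IsEmpty (HomWithKer F G s) :=
  ⟨fun ⟨f, hf⟩ => (f.map_adj huv).ne (Setoid.ker_def.1 (hf ▸ hs))⟩

def homWithKerEquivCopyMap {s : Setoid V} (hs : ∀ {u v}, F.Adj u v → ¬ s u v) :
    HomWithKer F G s ≃ (F.map (Quotient.mk s)).Copy G where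
  toFun f :=
    { toHom :=
        { toFun := Quotient.lift f.1 fun _ _ h => by rwa [← f.2] at h
          map_rel' := by
            rintro _ _ ⟨-, u, v, huv, rfl, rfl⟩
            exact f.1.map_adj huv }
      injective' := by
        rintro ⟨a⟩ ⟨b⟩ h
        exact Quotient.sound (f.2 ▸ Setoid.ker_def.2 h) }
  invFun g :=
    ⟨g.toHom.comp (Hom.map _ F fun huv => mt Quotient.exact (hs huv)), by
      ext a b
      exact g.injective.eq_iff.trans Quotient.eq⟩
  left_inv _ := rfl
  right_inv g := by
    ext ⟨a⟩
    rfl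

lemma card_homWithKer_eq_of_card_copy_eq {s : Setoid V}
    (h : Nat.card ((F.map (Quotient.mk s)).Copy G) = Nat.card ((F.map (Quotient.mk s)).Copy H)) :
    Nat.card (HomWithKer F G s) = Nat.card (HomWithKer F H s) := by
  by_cases hbad : ∃ u v, F.Adj u v ∧ s u v
  · obtain ⟨u, v, huv, hs⟩ := hbad
    have := isEmpty_homWithKer_of_adj (G := G) huv hs
    have := isEmpty_homWithKer_of_adj (G := H) huv hs
    simp only [Nat.card_of_isEmpty]
  · push Not at hbad
    rwa [Nat.card_congr (homWithKerEquivCopyMap (hbad _ _)),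
      Nat.card_congr (homWithKerEquivCopyMap (hbad _ _))]

theorem card_copy_eq_of_homCount_eq.{u} [Finite α] [Finite β]
    (h : ∀ {V : Type u} [Finite V] (F : SimpleGraph V), homCount F G = homCount F H)
    {V : Type u} [Finite V] (F : SimpleGraph V) : Nat.card (F.Copy G) = Nat.card (F.Copy H) := by
  induction hn : Nat.card V using Nat.strong_induction_on generalizing V with
  | _ n ih =>
  classical
  have : Fintype (Setoid V) := Fintype.ofFinite _
  have hfib : ∀ s ∈ Finset.univ.erase ⊥,
      Nat.card (HomWithKer F G s) = Nat.card (HomWithKer F H s) := fun s hs =>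
    card_homWithKer_eq_of_card_copy_eq
      (ih _ (hn ▸ Setoid.card_quotient_lt (Finset.ne_of_mem_erase hs)) _ rfl)
  have hsum := h F
  rw [homCount_eq_sum_card_homWithKer, homCount_eq_sum_card_homWithKer,
    ← Finset.add_sum_erase _ _ (Finset.mem_univ ⊥), ← Finset.add_sum_erase _ _ (Finset.mem_univ ⊥),
    Finset.sum_congr rfl hfib] at hsum
  simpa only [Nat.card_congr homWithKerBotEquivCopy] using Nat.add_right_cancel hsum

lemma Copy.adj_iff_of_surjective_mapEdgeSet (f : G.Copy H) (hf : Surjective f.mapEdgeSet)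
    {a b : α} : H.Adj (f a) (f b) ↔ G.Adj a b := by
  refine ⟨fun hab => ?_, f.toHom.map_adj⟩
  obtain ⟨⟨e, he⟩, hfe⟩ := hf ⟨s(f a, f b), hab⟩
  have : Sym2.map f e = Sym2.map f s(a, b) := congrArg Subtype.val hfe
  rwa [(Sym2.map.injective f.injective).eq_iff.1 this] at he

lemma isContained_of_card_copy_eq [Finite α] [Finite β]
    (h : Nat.card (G.Copy G) = Nat.card (G.Copy H)) : G ⊑ H :=
  (Nat.card_pos_iff.1 (h ▸ Nat.card_pos_iff.2 ⟨IsContained.refl G, inferInstance⟩)).1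

lemma IsContained.nonempty_iso [Finite α] [Finite β] (hGH : G ⊑ H) (hHG : H ⊑ G) :
    Nonempty (G ≃g H) := by
  obtain ⟨f⟩ := hGH
  obtain ⟨g⟩ := hHG
  have hV := f.injective.bijective_of_nat_card_le (Nat.card_le_card_of_injective g g.injective)
  have hE := f.mapEdgeSet.injective.bijective_of_nat_card_le
    (Nat.card_le_card_of_injective _ g.mapEdgeSet.injective)
  exact ⟨⟨Equiv.ofBijective f hV, f.adj_iff_of_surjective_mapEdgeSet hE.2⟩⟩

end SimpleGraph

open SimpleGraph in
/-- **Lovász (1967).** Two finite simple graphs `G` and `H` are isomorphic if and only if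
`hom(F,G) = hom(F,H)` for every finite simple graph `F`. -/
theorem hom_count_eq_iff_iso {α β : Type*} [Fintype α] [Fintype β]
    (G : SimpleGraph α) (H : SimpleGraph β) :
    (∀ (n : ℕ) (F : SimpleGraph (Fin n)), homCount F G = homCount F H) ↔
      Nonempty (G ≃g H) := by
  refine ⟨fun h => IsContained.nonempty_iso ?_ ?_, fun ⟨e⟩ n F => homCount_congr_right F e⟩
  · exact isContained_of_card_copy_eq
      (card_copy_eq_of_homCount_eq (homCount_eq_of_forall_fin h) G)
  · exact isContained_of_card_copy_eq
      (card_copy_eq_of_homCount_eq (homCount_eq_of_forall_fin fun n F => (h n F).symm) H)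
end

section
/- Let G and H be finite simple graphs with adjacency matrices A ∈ ℚ^{V×V} and B ∈ ℚ^{W×W}. Then hom(P_n, G) = hom(P_n, H) for every path P_n on n ≥ 1 vertices if and only if there exists a rational matrix X ∈ ℚ^{V×W} satisfying AX = XB and such that every row sum and every column sum of X equals 1 (no nonnegativity required). -/
/-!
Homomorphisms `P_{k+1} → G` are the walks of length `k` in `G`, so `hom(P_{k+1}, G) = 1ᵀ Aᵏ 1`.
If `A X = X B`, `X 1 = 1` and `1ᵀ X = 1ᵀ`, then `1ᵀ Aᵏ 1 = 1ᵀ Aᵏ X 1 = 1ᵀ X Bᵏ 1 = 1ᵀ Bᵏ 1`.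

Conversely, since `A` and `B` are symmetric, `(p(A) 1) ⬝ (q(A) 1) = 1ᵀ (p q)(A) 1` for polynomials
`p`, `q`, so equal walk counts make `p(B) 1 ↦ p(A) 1` a well-defined isometry on the cyclic
subspace `W` of `B` generated by `1`. Extending it by zero on `Wᗮ` (a complement of `W`, as the dot
product over an ordered field is anisotropic) gives `X`: both `W` and `Wᗮ` are `B`-invariant, which
yields `A X = X B`, and `1 ∈ W` yields the row and column sums.
-/

open Matrix Polynomial

namespace SimpleGraph

variable {V : Type*} {G : SimpleGraph V}

def pathGraphHomOfWalk (n : ℕ) :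
    (Σ u v, {p : G.Walk u v // p.length = n}) → (pathGraph (n + 1) →g G)
  | ⟨_, _, p, hp⟩ =>
    { toFun i := p.getVert i
      map_rel' {i j} hij := by
        rcases pathGraph_adj.1 hij with h | h
        · simpa [← h] using p.adj_getVert_succ (i := i) (by omega)
        · simpa [← h] using (p.adj_getVert_succ (i := j) (by omega)).symm }

theorem pathGraphHomOfWalk_bijective (n : ℕ) :
    Function.Bijective (pathGraphHomOfWalk (G := G) n) := by
  constructor
  · rintro ⟨u, v, p, rfl⟩ ⟨u', v', q, hq⟩ h
    have hvert (i : ℕ) (hi : i ≤ p.length) : p.getVert i = q.getVert i :=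
      DFunLike.congr_fun h ⟨i, by omega⟩
    obtain rfl : u = u' := by simpa using hvert 0 (Nat.zero_le _)
    obtain rfl : v = v' := by
      have := hvert p.length le_rfl
      rwa [Walk.getVert_length, ← hq, Walk.getVert_length] at this
    obtain rfl : p = q := Walk.ext_getVert_le_length hq.symm hvert
    rfl
  · intro φ
    have hchain : (List.ofFn φ).IsChain G.Adj :=
      List.isChain_ofFn.2 fun _ _ => φ.map_rel (pathGraph_adj.2 (Or.inl rfl))
    refine ⟨⟨_, _, Walk.ofSupport _ (by simp) hchain, by simp⟩, ?_⟩
    ext i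
    simp only [pathGraphHomOfWalk, RelHom.coeFn_mk]
    rw [Walk.getVert_eq_support_getElem _ (by simp; omega)]
    simp only [Walk.support_ofSupport, List.getElem_ofFn]

theorem homCount_pathGraph_succ [Fintype V] [DecidableEq V] [DecidableRel G.Adj]
    (R : Type*) [Semiring R] (n : ℕ) :
    (homCount (pathGraph (n + 1)) G : R) = 1 ⬝ᵥ (G.adjMatrix R ^ n *ᵥ 1) := by
  rw [homCount, ← Nat.card_eq_of_bijective _ (pathGraphHomOfWalk_bijective n)]
  simp only [Nat.card_eq_fintype_card, Fintype.card_sigma, Nat.cast_sum, dotProduct, mulVec,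
    Pi.one_apply, mul_one, one_mul, adjMatrix_pow_apply_eq_card_walk]
  rfl

end SimpleGraph

theorem Matrix.IsSymm.aeval {n R : Type*} [Fintype n] [DecidableEq n] [CommSemiring R]
    {A : Matrix n n R} (hA : A.IsSymm) (p : R[X]) : (aeval A p).IsSymm := by
  induction p using Polynomial.induction_on' with
  | add p q hp hq => simpa using hp.add hq
  | monomial k c => simpa [aeval_monomial, ← Algebra.smul_def] using (hA.pow k).smul c

theorem LinearMap.BilinForm.isCompl_orthogonal_dotProductBilin {K ι : Type*} [Field K]
    [LinearOrder K] [IsStrictOrderedRing K] [Fintype ι] (W : Submodule K (ι → K)) :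
    IsCompl W (orthogonal (dotProductBilin K K) W) := by
  refine (isCompl_orthogonal_iff_disjoint fun x y h => ?_).2 ?_
  · simpa [dotProduct_comm] using h
  · exact Submodule.disjoint_def.2 fun x hxW hx => dotProduct_self_eq_zero.1 (hx x hxW)

theorem LinearMap.exists_comp_eq_of_dotProduct_eq {K α β M : Type*} [Field K]
    [LinearOrder K] [IsStrictOrderedRing K] [Fintype α] [Fintype β] [AddCommGroup M] [Module K M]
    (S : M →ₗ[K] α → K) (T : M →ₗ[K] β → K) (h : ∀ m m', S m ⬝ᵥ S m' = T m ⬝ᵥ T m') :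
    ∃ Y : (β → K) →ₗ[K] α → K, (∀ m, Y (T m) = S m) ∧
      ∀ x ∈ BilinForm.orthogonal (dotProductBilin K K) (range T), Y x = 0 := by
  have hker : ker T ≤ ker S := fun m hm => by
    rw [mem_ker] at hm ⊢
    exact dotProduct_self_eq_zero.1 (by rw [h, hm, zero_dotProduct])
  let ψ : range T →ₗ[K] α → K := (ker T).liftQ S hker ∘ₗ T.quotKerEquivRange.symm.toLinearMap
  have hψ (m : M) : ψ ⟨T m, mem_range_self T m⟩ = S m := by
    simp [ψ, quotKerEquivRange_symm_apply_image]
  have hW := BilinForm.isCompl_orthogonal_dotProductBilin (range T)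
  exact ⟨ofIsCompl hW ψ 0, fun m => (ofIsCompl_apply_left hW _).trans (hψ m),
    fun x hx => ofIsCompl_apply_right hW ⟨x, hx⟩⟩

namespace Matrix

variable {R α β : Type*} [CommSemiring R] [Fintype α] [Fintype β] [DecidableEq α] [DecidableEq β]

noncomputable def aevalMulVec (A : Matrix α α R) (v : α → R) : R[X] →ₗ[R] α → R where
  toFun p := aeval A p *ᵥ v
  map_add' p q := by simp [add_mulVec]
  map_smul' c p := by simp [smul_mulVec]

@[simp]
theorem aevalMulVec_apply (A : Matrix α α R) (v : α → R) (p : R[X]) :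
    A.aevalMulVec v p = aeval A p *ᵥ v := rfl

theorem IsSymm.aeval_mulVec_dotProduct {A : Matrix α α R} (hA : A.IsSymm) (p q : R[X])
    (x y : α → R) :
    (Polynomial.aeval A p *ᵥ x) ⬝ᵥ (Polynomial.aeval A q *ᵥ y) =
      x ⬝ᵥ (Polynomial.aeval A (p * q) *ᵥ y) := by
  rw [dotProduct_comm, dotProduct_mulVec, ← mulVec_transpose, (hA.aeval p).eq, dotProduct_comm,
    mulVec_mulVec, map_mul]

theorem dotProduct_aeval_mulVec_eq {A : Matrix α α R} {B : Matrix β β R} {v : α → R} {w : β → R}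
    (h : ∀ k : ℕ, v ⬝ᵥ (A ^ k *ᵥ v) = w ⬝ᵥ (B ^ k *ᵥ w)) (p : R[X]) :
    v ⬝ᵥ (aeval A p *ᵥ v) = w ⬝ᵥ (aeval B p *ᵥ w) := by
  induction p using Polynomial.induction_on' with
  | add p q hp hq => simp [add_mulVec, hp, hq]
  | monomial k c => simp [aeval_monomial, ← Algebra.smul_def, smul_mulVec, h k]

end Matrix

section OrderedField

open LinearMap

variable {K α β : Type*} [Field K] [LinearOrder K] [IsStrictOrderedRing K]
  [Fintype α] [Fintype β] [DecidableEq α] [DecidableEq β]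

theorem Matrix.exists_intertwining_of_dotProduct_pow_mulVec_eq {A : Matrix α α K}
    {B : Matrix β β K} (hA : A.IsSymm) (hB : B.IsSymm) {v : α → K} {w : β → K}
    (h : ∀ k : ℕ, v ⬝ᵥ (A ^ k *ᵥ v) = w ⬝ᵥ (B ^ k *ᵥ w)) :
    ∃ X : Matrix α β K, A * X = X * B ∧ X *ᵥ w = v ∧ v ᵥ* X = w := by
  set S := A.aevalMulVec v
  set T := B.aevalMulVec w
  have gram (p q : K[X]) : S p ⬝ᵥ S q = T p ⬝ᵥ T q := by
    simp only [S, T, aevalMulVec_apply, hA.aeval_mulVec_dotProduct, hB.aeval_mulVec_dotProduct,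
      dotProduct_aeval_mulVec_eq h]
  obtain ⟨Y, hYT, hYperp⟩ := exists_comp_eq_of_dotProduct_eq S T gram
  set Wperp := BilinForm.orthogonal (dotProductBilin K K) (range T)
  have hW : Codisjoint (range T) Wperp :=
    (BilinForm.isCompl_orthogonal_dotProductBilin (range T)).codisjoint
  have mem_Wperp {x} : x ∈ Wperp ↔ ∀ p, T p ⬝ᵥ x = 0 := by
    simp [Wperp, BilinForm.mem_orthogonal_iff]
  have hAS (p : K[X]) : A *ᵥ S p = S (X * p) := by simp [S, mulVec_mulVec]
  have hBT (p : K[X]) : B *ᵥ T p = T (X * p) := by simp [T, mulVec_mulVec]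
  have hBWperp (x) (hx : x ∈ Wperp) : B *ᵥ x ∈ Wperp := by
    refine mem_Wperp.2 fun p => ?_
    rw [dotProduct_mulVec, ← mulVec_transpose, hB.eq, hBT, mem_Wperp.1 hx]
  have hcomm : toLin' A ∘ₗ Y = Y ∘ₗ toLin' B := by
    refine ext_on_codisjoint hW ?_ fun x hx => ?_
    · rintro _ ⟨p, rfl⟩
      simp [hYT, hAS, hBT]
    · simp [hYperp x hx, hYperp _ (hBWperp x hx)]
  have hdot : dotProductBilin K K v ∘ₗ Y = dotProductBilin K K w := by
    refine ext_on_codisjoint hW ?_ fun x hx => ?_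
    · rintro _ ⟨p, rfl⟩
      rw [LinearMap.comp_apply, hYT]
      simpa [S, T] using dotProduct_aeval_mulVec_eq h p
    · simpa [hYperp x hx, T] using (mem_Wperp.1 hx 1).symm
  refine ⟨toMatrix' Y, ?_, by simpa [S, T] using hYT 1, ?_⟩
  · simpa [toMatrix'_comp] using congrArg toMatrix' hcomm
  · ext i
    have := LinearMap.congr_fun hdot (Pi.single i 1)
    rwa [LinearMap.comp_apply, dotProductBilin_apply_apply, ← toMatrix'_mulVec, dotProduct_mulVec,
      dotProduct_single_one, dotProductBilin_apply_apply, dotProduct_single_one] at this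

end OrderedField

namespace Matrix

theorem dotProduct_pow_mulVec_eq_of_intertwining {R α β : Type*} [Semiring R] [Fintype α]
    [Fintype β] [DecidableEq α] [DecidableEq β] {A : Matrix α α R} {B : Matrix β β R}
    {X : Matrix α β R} {v : α → R} {w : β → R} (hAX : A * X = X * B) (hXw : X *ᵥ w = v)
    (hvX : v ᵥ* X = w) (k : ℕ) : v ⬝ᵥ (A ^ k *ᵥ v) = w ⬝ᵥ (B ^ k *ᵥ w) := by
  have hpow : A ^ k * X = X * B ^ k := by
    induction k with
    | zero => simp
    | succ k ih => rw [pow_succ, Matrix.mul_assoc, hAX, ← Matrix.mul_assoc, ih, Matrix.mul_assoc,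
        ← pow_succ]
  calc v ⬝ᵥ (A ^ k *ᵥ v) = v ⬝ᵥ ((A ^ k * X) *ᵥ w) := by rw [← mulVec_mulVec, hXw]
    _ = v ⬝ᵥ (X *ᵥ (B ^ k *ᵥ w)) := by rw [hpow, mulVec_mulVec]
    _ = w ⬝ᵥ (B ^ k *ᵥ w) := by rw [dotProduct_mulVec, hvX]

end Matrix

theorem hom_count_paths_eq_iff_general {α β : Type*}
    [Fintype α] [Fintype β]
    (G : SimpleGraph α) (H : SimpleGraph β)
    [DecidableRel G.Adj] [DecidableRel H.Adj] :
    (∀ n : ℕ, 1 ≤ n →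
        homCount (SimpleGraph.pathGraph n) G = homCount (SimpleGraph.pathGraph n) H) ↔
      ∃ X : Matrix α β ℚ,
        G.adjMatrix ℚ * X = X * H.adjMatrix ℚ ∧
        (∀ v : α, ∑ w : β, X v w = 1) ∧
        (∀ w : β, ∑ v : α, X v w = 1) := by
  classical
  have hcount (k : ℕ) :
      homCount (SimpleGraph.pathGraph (k + 1)) G = homCount (SimpleGraph.pathGraph (k + 1)) H ↔
      (1 : α → ℚ) ⬝ᵥ (G.adjMatrix ℚ ^ k *ᵥ 1) = (1 : β → ℚ) ⬝ᵥ (H.adjMatrix ℚ ^ k *ᵥ 1) := by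
    rw [← SimpleGraph.homCount_pathGraph_succ, ← SimpleGraph.homCount_pathGraph_succ,
      Nat.cast_inj]
  have hrows (X : Matrix α β ℚ) : (∀ v, ∑ w, X v w = 1) ↔ X *ᵥ 1 = 1 := by
    simp [funext_iff, mulVec, dotProduct]
  have hcols (X : Matrix α β ℚ) : (∀ w, ∑ v, X v w = 1) ↔ 1 ᵥ* X = 1 := by
    simp [funext_iff, vecMul, dotProduct]
  constructor
  · intro h
    obtain ⟨X, hAX, hrow, hcol⟩ := exists_intertwining_of_dotProduct_pow_mulVec_eq
      G.isSymm_adjMatrix H.isSymm_adjMatrix fun k => (hcount k).1 (h (k + 1) k.succ_pos)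
    exact ⟨X, hAX, (hrows X).2 hrow, (hcols X).2 hcol⟩
  · rintro ⟨X, hAX, hrow, hcol⟩ n hn
    obtain ⟨k, rfl⟩ := Nat.exists_eq_add_of_le' hn
    exact (hcount k).2 (dotProduct_pow_mulVec_eq_of_intertwining hAX ((hrows X).1 hrow)
      ((hcols X).1 hcol) k)

/-- **Dell–Grohe–Rattan.** Two finite simple graphs `G`, `H` with adjacency matrices `A`, `B`
over `ℚ` satisfy `hom(P_n, G) = hom(P_n, H)` for every path `P_n` (`n ≥ 1` vertices) if and
only if there is a rational matrix `X` with `A X = X B` all of whose row sums and column sums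
equal `1` (no nonnegativity required). -/
theorem hom_count_paths_eq_iff {α β : Type*}
    [Fintype α] [Fintype β] [DecidableEq α] [DecidableEq β]
    (G : SimpleGraph α) (H : SimpleGraph β)
    [DecidableRel G.Adj] [DecidableRel H.Adj] :
    (∀ n : ℕ, 1 ≤ n →
        homCount (SimpleGraph.pathGraph n) G = homCount (SimpleGraph.pathGraph n) H) ↔
      ∃ X : Matrix α β ℚ,
        G.adjMatrix ℚ * X = X * H.adjMatrix ℚ ∧
        (∀ v : α, ∑ w : β, X v w = 1) ∧
        (∀ w : β, ∑ v : α, X v w = 1) :=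
  hom_count_paths_eq_iff_general G H
end

section
/- Let n ≥ 1 and let F_1, …, F_m be a list of pairwise non-isomorphic finite simple graphs containing exactly one representative of each isomorphism class of simple graphs with at most n vertices. Then the m×m rational matrix HOM with entries HOM_{ij} := hom(F_i, F_j) is invertible. -/
open Function Finset

namespace Matrix

variable {R n ι : Type*} [CommRing R] [Fintype n] [DecidableEq n] [LinearOrder ι]

theorem det_eq_prod_diag_of_offDiag_lt (M : Matrix n n R) (b : n → ι)
    (hM : ∀ i j, i ≠ j → M i j ≠ 0 → b i < b j) : M.det = ∏ i, M i i := by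
  have hblock : M.BlockTriangular b := fun i j hji => by
    by_contra hne
    exact (hM i j (fun hij => (hij ▸ hji).false) hne).asymm hji
  have hdiag (a : ι) : M.toSquareBlock b a = diagonal fun i : {i // b i = a} => M i i := by
    ext i j
    by_cases hij : i = j
    · subst hij
      simp [toSquareBlock_def]
    · rw [diagonal_apply_ne _ hij]
      by_contra hne
      exact (hM i j (fun h => hij (Subtype.ext h)) hne).ne (i.2.trans j.2.symm)
  classical
  rw [hblock.det]
  simp_rw [hdiag, det_diagonal]
  rw [← prod_fiberwise_of_maps_to (t := univ.image b) (fun i _ => mem_image_of_mem b (mem_univ i))]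
  refine prod_congr rfl fun a _ => (prod_subtype _ (fun i => ?_) fun i => M i i).symm
  simp

end Matrix

namespace SimpleGraph

variable {α β γ δ : Type*} {F : SimpleGraph α} {G : SimpleGraph β} {H : SimpleGraph γ}
  {K : SimpleGraph δ}

instance [Finite α] [Finite β] : Finite (F ≃g G) :=
  Finite.of_injective _ RelIso.toEquiv_injective

instance [Finite α] [Finite β] : Finite (Copy F G) :=
  Finite.of_injective _ DFunLike.coe_injective

lemma card_aut_pos [Finite α] (F : SimpleGraph α) : 0 < Nat.card (F ≃g F) :=
  have : Nonempty (F ≃g F) := ⟨.refl⟩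
  Nat.card_pos

lemma card_iso_eq_card_aut (σ₀ : F ≃g G) : Nat.card (F ≃g G) = Nat.card (G ≃g G) :=
  Nat.card_congr
    { toFun := σ₀.symm.trans
      invFun := σ₀.trans
      left_inv := fun σ => by ext; simp
      right_inv := fun τ => by ext; simp }

def IsQuotientMap (F : SimpleGraph α) (K : SimpleGraph δ) (q : α → δ) : Prop :=
  Surjective q ∧ ∀ x y, K.Adj x y ↔ Relation.Map F.Adj q q x y

noncomputable def quotientCount (F : SimpleGraph α) (K : SimpleGraph δ) : ℕ :=
  Nat.card {q : α → δ // IsQuotientMap F K q}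

namespace IsQuotientMap

variable {q : α → δ} {π : α → γ}

protected lemma id : IsQuotientMap F F id :=
  ⟨surjective_id, fun x y => by simp⟩

def toHom (hq : IsQuotientMap F K q) : F →g K :=
  ⟨q, fun huv => (hq.2 _ _).2 ⟨_, _, huv, rfl, rfl⟩⟩

lemma iso_comp (hπ : IsQuotientMap F H π) (σ : H ≃g K) : IsQuotientMap F K (σ ∘ π) := by
  refine ⟨σ.surjective.comp hπ.1, fun x y => ?_⟩
  obtain ⟨x, rfl⟩ := σ.surjective x
  obtain ⟨y, rfl⟩ := σ.surjective y
  rw [σ.map_adj_iff, hπ.2]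
  simp [Relation.map_apply]

lemma of_surjective_mapEdgeSet (f : F →g K) (hv : Surjective f) (he : Surjective f.mapEdgeSet) :
    IsQuotientMap F K f := by
  refine ⟨hv, fun x y => ⟨fun hxy => ?_, ?_⟩⟩
  · obtain ⟨⟨e, he'⟩, hexy⟩ := he ⟨s(x, y), hxy⟩
    induction e with
    | _ a b =>
      rcases Sym2.eq_iff.mp (Subtype.ext_iff.mp hexy) with ⟨rfl, rfl⟩ | ⟨rfl, rfl⟩
      · exact ⟨a, b, he', rfl, rfl⟩
      · exact ⟨b, a, (F.mem_edgeSet.mp he').symm, rfl, rfl⟩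
  · rintro ⟨a, b, hab, rfl, rfl⟩
    exact f.map_adj hab

lemma card_le [Finite α] (hq : IsQuotientMap F K q) : Nat.card δ ≤ Nat.card α :=
  Nat.card_le_card_of_surjective q hq.1

lemma exists_iso_of_ker (hπ : IsQuotientMap F H π) (hq : IsQuotientMap F K q)
    (hker : ∀ u v, π u = π v ↔ q u = q v) : ∃ σ : H ≃g K, ⇑σ ∘ π = q := by
  set f : γ → δ := q ∘ surjInv hπ.1
  have hfπ : f ∘ π = q := funext fun u => (hker _ u).mp (surjInv_eq hπ.1 (π u))
  have hf : Bijective f := by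
    refine ⟨hπ.1.forall₂.mpr fun u v huv => ?_, fun z => ?_⟩
    · rw [← comp_apply (f := f), ← comp_apply (f := f), hfπ] at huv
      exact (hker u v).mpr huv
    · obtain ⟨u, rfl⟩ := hq.1 z
      exact ⟨π u, congrFun hfπ u⟩
  refine ⟨⟨Equiv.ofBijective f hf, @fun x y => ?_⟩, hfπ⟩
  obtain ⟨a, rfl⟩ := hπ.1 x
  obtain ⟨b, rfl⟩ := hπ.1 y
  change K.Adj ((f ∘ π) a) ((f ∘ π) b) ↔ H.Adj (π a) (π b)
  simp only [hfπ, hq.2, hπ.2, Relation.map_apply, hker]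

lemma nonempty_iso_of_card_eq [Finite α] (hq : IsQuotientMap F K q)
    (hcard : Nat.card α = Nat.card δ) : Nonempty (F ≃g K) :=
  have hinj := ((Nat.bijective_iff_surjective_and_card q).mpr ⟨hq.1, hcard⟩).1
  let ⟨σ, _⟩ := IsQuotientMap.id.exists_iso_of_ker hq fun _ _ => hinj.eq_iff.symm
  ⟨σ⟩

end IsQuotientMap

lemma Copy.nonempty_iso_of_card_eq [Finite α] [Finite δ] (f : Copy F K)
    (hV : Nat.card α = Nat.card δ) (hE : Nat.card F.edgeSet = Nat.card K.edgeSet) :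
    Nonempty (F ≃g K) :=
  (IsQuotientMap.of_surjective_mapEdgeSet f.toHom
    ((Nat.bijective_iff_injective_and_card _).mpr ⟨f.injective, hV⟩).2
    ((Nat.bijective_iff_injective_and_card _).mpr ⟨f.mapEdgeSet.injective, hE⟩).2)
    |>.nonempty_iso_of_card_eq hV

lemma card_factorizations_eq_card_iso {π : α → γ} (hπ : IsQuotientMap F H π) (ι : Copy H G) :
    Nat.card {p : {q : α → δ // IsQuotientMap F K q} × Copy K G // ⇑p.2 ∘ p.1.1 = ι ∘ π} =
      Nat.card (H ≃g K) := by
  have hfac (σ : H ≃g K) : ⇑(ι.comp σ.symm.toCopy) ∘ (σ ∘ π) = ι ∘ π := by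
    ext u
    simp
  refine (Nat.card_eq_of_bijective
    (fun σ => ⟨(⟨σ ∘ π, hπ.iso_comp σ⟩, ι.comp σ.symm.toCopy), hfac σ⟩) ⟨?_, ?_⟩).symm
  · intro σ τ hστ
    have hσπ : ⇑σ ∘ π = ⇑τ ∘ π := congrArg (fun p => p.1.1.1) hστ
    exact DFunLike.coe_injective (hπ.1.injective_comp_right hσπ)
  · rintro ⟨⟨⟨q, hq⟩, e⟩, he⟩
    have heq (u : α) : e (q u) = ι (π u) := congrFun he u
    have hker (u v : α) : π u = π v ↔ q u = q v := by
      rw [← ι.injective.eq_iff, ← e.injective.eq_iff]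
      simp only [Copy.toHom_apply, heq]
    obtain ⟨σ, hσ⟩ := hπ.exists_iso_of_ker hq hker
    refine ⟨σ, Subtype.ext (Prod.ext (Subtype.ext hσ) (Copy.ext fun z => ?_))⟩
    obtain ⟨u, rfl⟩ := hq.1 z
    show ι (σ.symm (q u)) = e (q u)
    rw [heq, ← hσ, comp_apply, RelIso.symm_apply_apply]

lemma isQuotientMap_map_top (h : F →g G) :
    IsQuotientMap F ((⊤ : F.Subgraph).map h).coe fun u => ⟨h u, u, trivial, rfl⟩ := by
  refine ⟨fun ⟨x, u, _, hu⟩ => ⟨u, Subtype.ext hu⟩, fun x y => ?_⟩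
  simp [Relation.map_apply, Subtype.ext_iff]

lemma quotientCount_mul_labelledCopyCount [Fintype α] [Fintype β] [Fintype δ]
    [Fintype (F →g G)] :
    quotientCount F K * G.labelledCopyCount K =
      ∑ h : F →g G, Nat.card (((⊤ : F.Subgraph).map h).coe ≃g K) := by
  let compose (p : {q : α → δ // IsQuotientMap F K q} × Copy K G) : F →g G :=
    p.2.toHom.comp p.1.2.toHom
  rw [quotientCount, labelledCopyCount, Fintype.card_eq_nat_card, ← Nat.card_prod,
    ← Nat.card_congr (Equiv.sigmaFiberEquiv compose), Nat.card_sigma]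
  refine sum_congr rfl fun h _ => ?_
  rw [Nat.card_congr (Equiv.subtypeEquivRight fun p => DFunLike.coe_fn_eq.symm)]
  exact card_factorizations_eq_card_iso (isQuotientMap_map_top h) (Subgraph.coeCopy _)

section Family

variable {R : Type*} [Field R] [CharZero R] {ι : Type*} [Fintype ι] {V : ι → Type*}
  [∀ i, Fintype (V i)]

lemma sum_card_iso_div_card_aut [Finite γ] (K : ∀ i, SimpleGraph (V i))
    (hH : ∃! i, Nonempty (H ≃g K i)) :
    ∑ i, (Nat.card (H ≃g K i) : R) / Nat.card (K i ≃g K i) = 1 := by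
  obtain ⟨i, ⟨σ⟩, hi⟩ := hH
  rw [sum_eq_single i, card_iso_eq_card_aut σ, div_self]
  · exact Nat.cast_ne_zero.mpr (card_aut_pos _).ne'
  · intro j _ hji
    have : IsEmpty (H ≃g K j) := not_nonempty_iff.mp fun hj => hji (hi j hj)
    simp
  · simp

theorem homCount_eq_sum [Fintype α] [Fintype β] (K : ∀ i, SimpleGraph (V i))
    (hK : ∀ h : F →g G, ∃! i, Nonempty (((⊤ : F.Subgraph).map h).coe ≃g K i)) :
    (homCount F G : R) = ∑ i, (quotientCount F (K i) : R) * (Nat.card (K i ≃g K i) : R)⁻¹ *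
      (G.labelledCopyCount (K i) : R) := by
  have := Fintype.ofFinite (F →g G)
  calc (homCount F G : R)
      = ∑ h : F →g G, ∑ i, (Nat.card (((⊤ : F.Subgraph).map h).coe ≃g K i) : R) /
          Nat.card (K i ≃g K i) := by
        simp [sum_card_iso_div_card_aut K (hK _), homCount, Nat.card_eq_fintype_card]
    _ = _ := by
        rw [sum_comm]
        refine sum_congr rfl fun i _ => ?_
        rw [← sum_div, mul_right_comm, ← Nat.cast_mul, quotientCount_mul_labelledCopyCount,
          Nat.cast_sum, div_eq_mul_inv]

variable [DecidableEq ι] (K : ∀ i, SimpleGraph (V i))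

theorem homCountMatrix_eq_mul
    (hK : ∀ i j (h : K i →g K j), ∃! k, Nonempty (((⊤ : (K i).Subgraph).map h).coe ≃g K k)) :
    Matrix.of (fun i j => (homCount (K i) (K j) : R)) =
      Matrix.of (fun i j => (quotientCount (K i) (K j) : R)) *
        Matrix.diagonal (fun k => (Nat.card (K k ≃g K k) : R)⁻¹) *
          Matrix.of (fun i j => ((K j).labelledCopyCount (K i) : R)) := by
  ext i j
  rw [Matrix.mul_apply, Matrix.of_apply, homCount_eq_sum K (hK i j)]
  simp [Matrix.mul_diagonal]

theorem isUnit_quotientCountMatrix (hK : ∀ i j, Nonempty (K i ≃g K j) → i = j) :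
    IsUnit (Matrix.of fun i j => (quotientCount (K i) (K j) : R)) := by
  rw [Matrix.isUnit_iff_isUnit_det, Matrix.det_eq_prod_diag_of_offDiag_lt _
    (fun i => OrderDual.toDual (Nat.card (V i))) fun i j hij hne => ?_]
  · refine isUnit_iff_ne_zero.mpr (prod_ne_zero_iff.mpr fun i _ => ?_)
    have : Nonempty {q // IsQuotientMap (K i) (K i) q} := ⟨⟨id, IsQuotientMap.id⟩⟩
    exact Nat.cast_ne_zero.mpr Nat.card_pos.ne'
  · obtain ⟨⟨q, hq⟩⟩ := (Nat.card_ne_zero.mp (Nat.cast_ne_zero.mp hne)).1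
    refine OrderDual.toDual_lt_toDual.mpr (hq.card_le.lt_of_ne fun hcard => hij ?_)
    exact hK i j (hq.nonempty_iso_of_card_eq hcard.symm)

theorem isUnit_labelledCopyCountMatrix (hK : ∀ i j, Nonempty (K i ≃g K j) → i = j) :
    IsUnit (Matrix.of fun i j => ((K j).labelledCopyCount (K i) : R)) := by
  rw [Matrix.isUnit_iff_isUnit_det, Matrix.det_eq_prod_diag_of_offDiag_lt _
    (fun i => Nat.card (V i) + Nat.card (K i).edgeSet) fun i j hij hne => ?_]
  · refine isUnit_iff_ne_zero.mpr (prod_ne_zero_iff.mpr fun i _ => ?_)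
    exact Nat.cast_ne_zero.mpr (labelledCopyCount_pos.mpr (IsContained.refl _)).ne'
  · obtain ⟨f⟩ := labelledCopyCount_pos.mp (Nat.pos_of_ne_zero (Nat.cast_ne_zero.mp hne))
    have hV := Nat.card_le_card_of_injective f f.injective
    have hE := Nat.card_le_card_of_injective f.mapEdgeSet f.mapEdgeSet.injective
    by_contra hle
    exact hij (hK i j (f.nonempty_iso_of_card_eq (by omega) (by omega)))

end Family

end SimpleGraph

open SimpleGraph

theorem homMatrix_isUnit_general (n : ℕ) (m : ℕ)
    (Fs : Fin m → Σ k : ℕ, SimpleGraph (Fin k))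
    (hle : ∀ i, (Fs i).1 ≤ n)
    (hrep : ∀ k : ℕ, k ≤ n → ∀ F : SimpleGraph (Fin k), ∃! i, Nonempty (F ≃g (Fs i).2)) :
    IsUnit (Matrix.of fun i j : Fin m => (homCount (Fs i).2 (Fs j).2 : ℚ)) := by
  have hclass {γ : Type} [Finite γ] (H : SimpleGraph γ) (hγ : Nat.card γ ≤ n) :
      ∃! i, Nonempty (H ≃g (Fs i).2) :=
    let φ := Iso.map (Finite.equivFin γ) H
    (existsUnique_congr fun i => ⟨fun ⟨σ⟩ => ⟨φ.symm.trans σ⟩, fun ⟨σ⟩ => ⟨φ.trans σ⟩⟩).2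
      (hrep _ hγ _)
  have hnoniso (i j : Fin m) (hij : Nonempty ((Fs i).2 ≃g (Fs j).2)) : i = j :=
    (hclass (Fs i).2 (by simpa using hle i)).unique ⟨.refl⟩ hij
  have himage (i j : Fin m) (h : (Fs i).2 →g (Fs j).2) :
      ∃! k, Nonempty (((⊤ : (Fs i).2.Subgraph).map h).coe ≃g (Fs k).2) :=
    hclass _ ((Finite.card_subtype_le _).trans (by simpa using hle j))
  have hdiag : IsUnit (Matrix.diagonal fun k => (Nat.card ((Fs k).2 ≃g (Fs k).2) : ℚ)⁻¹) :=
    Matrix.isUnit_diagonal.mpr <| Pi.isUnit_iff.mpr fun k =>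
      (inv_pos.mpr (Nat.cast_pos.mpr (card_aut_pos _))).ne'.isUnit
  rw [homCountMatrix_eq_mul (fun i => (Fs i).2) himage]
  exact ((isUnit_quotientCountMatrix _ hnoniso).mul hdiag).mul
    (isUnit_labelledCopyCountMatrix _ hnoniso)

/-- If `F₁, …, F_m` contains exactly one representative of each isomorphism class of simple
graphs with at most `n` vertices (`n ≥ 1`), then the matrix `HOM` with entries
`HOM_{ij} = hom(F_i, F_j)` (over `ℚ`) is invertible. -/
theorem homMatrix_isUnit (n : ℕ) (hn : 1 ≤ n) (m : ℕ)
    (Fs : Fin m → Σ k : ℕ, SimpleGraph (Fin k))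
    (hle : ∀ i, (Fs i).1 ≤ n)
    (hrep : ∀ k : ℕ, k ≤ n → ∀ F : SimpleGraph (Fin k), ∃! i, Nonempty (F ≃g (Fs i).2)) :
    IsUnit (Matrix.of fun i j : Fin m => (homCount (Fs i).2 (Fs j).2 : ℚ)) :=
  homMatrix_isUnit_general n m Fs hle hrep
end

section
/- Let A be an m×n matrix of nonnegative real numbers whose columns are pairwise distinct, and let p, q ∈ ℝ^n have nonnegative entries. If for every vector d = (d_1,…,d_m) of nonnegative integers it holds that Σ_{j=1}^n (Π_{i=1}^m A_{ij}^{d_i}) · p_j = Σ_{j=1}^n (Π_{i=1}^m A_{ij}^{d_i}) · q_j (with the convention 0^0 = 1), then p_j = q_j for all j. -/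
/-!
Put `r = p - q` and view the columns of `A` as points `x j ∈ ℝ^m`. The hypothesis says that the
functional `f ↦ ∑ j, f (x j) * r j` kills every monomial, hence every polynomial. Since the points
are distinct, polynomials interpolate the indicator of any single point `x j₀`, and evaluating the
functional there gives `r j₀ = 0`.
-/

namespace MvPolynomial

variable {σ ι K : Type*}

theorem exists_eval_eq_one_eval_eq_zero [Field K] {a b : σ → K} (hab : a ≠ b) :
    ∃ Q : MvPolynomial σ K, eval a Q = 1 ∧ eval b Q = 0 := by
  obtain ⟨i, hi⟩ := Function.ne_iff.mp hab
  refine ⟨C (a i - b i)⁻¹ * (X i - C (b i)), ?_, by simp⟩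
  simp [inv_mul_cancel₀ (sub_ne_zero.mpr hi)]

theorem exists_eval_eq_ite [Field K] [Fintype ι] [DecidableEq ι] {x : ι → σ → K}
    (hx : Function.Injective x) (j₀ : ι) :
    ∃ P : MvPolynomial σ K, ∀ j, eval (x j) P = if j = j₀ then 1 else 0 := by
  choose Q hQ₁ hQ₀ using fun j : {j // j ≠ j₀} => exists_eval_eq_one_eval_eq_zero (hx.ne j.2.symm)
  refine ⟨∏ j, Q j, fun k => ?_⟩
  rw [map_prod]
  split_ifs with hk
  · subst hk
    exact Finset.prod_eq_one fun j _ => hQ₁ j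
  · exact Finset.prod_eq_zero (Finset.mem_univ ⟨k, hk⟩) (hQ₀ ⟨k, hk⟩)

theorem sum_eval_mul_eq_zero [CommSemiring K] [Fintype σ] [Fintype ι] {x : ι → σ → K}
    {r : ι → K} (h : ∀ d : σ → ℕ, ∑ j, (∏ i, x j i ^ d i) * r j = 0) (P : MvPolynomial σ K) :
    ∑ j, eval (x j) P * r j = 0 := by
  induction P using induction_on' with
  | monomial u a =>
    simp only [eval_monomial, Finsupp.prod_fintype _ _ (fun _ => pow_zero _), mul_assoc,
      ← Finset.mul_sum, h u, mul_zero]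
  | add P Q hP hQ =>
    simp only [map_add, add_mul, Finset.sum_add_distrib, hP, hQ, add_zero]

end MvPolynomial

theorem eq_of_moment_sums_eq_general (m n : ℕ) (A : Matrix (Fin m) (Fin n) ℝ)
    (hcols : ∀ j j' : Fin n, j ≠ j' → ∃ i, A i j ≠ A i j')
    (p q : Fin n → ℝ)
    (h : ∀ d : Fin m → ℕ,
      ∑ j, (∏ i, A i j ^ d i) * p j = ∑ j, (∏ i, A i j ^ d i) * q j) :
    ∀ j, p j = q j := by
  intro j₀
  have hx : Function.Injective fun j i => A i j := fun j j' hjj' => by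
    by_contra hne
    obtain ⟨i, hi⟩ := hcols j j' hne
    exact hi (congrFun hjj' i)
  have hmoments (d : Fin m → ℕ) : ∑ j, (∏ i, A i j ^ d i) * (p - q) j = 0 := by
    simp only [Pi.sub_apply, mul_sub, Finset.sum_sub_distrib, h d, sub_self]
  obtain ⟨P, hP⟩ := MvPolynomial.exists_eval_eq_ite hx j₀
  simpa [hP, sub_eq_zero] using MvPolynomial.sum_eval_mul_eq_zero hmoments P

/-- Let `A` be an `m × n` matrix of nonnegative reals with pairwise distinct columns, and let
`p, q` be nonnegative vectors. If `Σ_j (Π_i A i j ^ d i) * p j = Σ_j (Π_i A i j ^ d i) * q j`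
for every vector `d` of nonnegative integers (with the convention `0 ^ 0 = 1`), then `p = q`. -/
theorem eq_of_moment_sums_eq (m n : ℕ) (A : Matrix (Fin m) (Fin n) ℝ)
    (hA : ∀ i j, 0 ≤ A i j)
    (hcols : ∀ j j' : Fin n, j ≠ j' → ∃ i, A i j ≠ A i j')
    (p q : Fin n → ℝ) (hp : ∀ j, 0 ≤ p j) (hq : ∀ j, 0 ≤ q j)
    (h : ∀ d : Fin m → ℕ,
      ∑ j, (∏ i, A i j ^ d i) * p j = ∑ j, (∏ i, A i j ^ d i) * q j) :
    ∀ j, p j = q j :=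
  eq_of_moment_sums_eq_general m n A hcols p q h
end

section
/- Let G = (V, E_G) and H = (W, E_H) be finite directed graphs (finite vertex sets with binary edge relations). Then hom(F, G) = hom(F, H) for every finite directed acyclic graph F — i.e. every finite directed graph whose edge relation admits no directed cycle (no vertex a with a path of one or more edges from a back to a) — if and only if G and H are isomorphic (there is a bijection f : V → W with (u,u') ∈ E_G ⇔ (f(u), f(u')) ∈ E_H). -/
/-- The number of homomorphisms between directed graphs (vertex types with edge relations):
maps sending edges to edges. -/
noncomputable def dihomCount {α β : Type*} (E : α → α → Prop) (E' : β → β → Prop) : ℕ :=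
  Nat.card {h : α → β // ∀ a b, E a b → E' (h a) (h b)}

/-- A directed graph is acyclic if no vertex is related to itself by the transitive closure
of the edge relation. -/
def DiAcyclic {α : Type*} (E : α → α → Prop) : Prop :=
  ¬∃ a, Relation.TransGen E a a

/-!
Call a pattern `P` graded if some `ρ` into a preorder strictly increases along its edges; graded
patterns are acyclic. A homomorphism `h` from a graded pattern factors uniquely through the
quotient by its level kernel `θ` (`x ~ y` iff `ρ x = ρ y` and `h x = h y`), as a homomorphism
that is injective on every level, and the quotient is again graded. Hence `hom(P, -)` is the sum
over `θ` of the level-injective counts of `P / θ`, and induction on the number of vertices shows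
that the level-injective counts are the same for `G` and `H`.

Stack `M` copies of `G` in levels, with an edge from copy `i` to every later copy `j` above each
edge of `G`. The identity on each copy is level-injective into `G`, so there is a level-injective
homomorphism into `H` as well. For `M` large, two copies `i < j` are sent to `H` by the same
injective map `f`, and the edges between these two copies make `f` a homomorphism. Injective
homomorphisms `G → H` and `H → G` force `f` to be bijective on vertices and on edges.
-/

open Function

noncomputable instance Setoid.instFintypeOfFinite {σ : Type*} [Finite σ] : Fintype (Setoid σ) :=
  have : Finite (Setoid σ) := Finite.of_injective (fun r : Setoid σ => ⇑r) fun _ _ h =>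
    Setoid.ext fun x y => Iff.of_eq (congrFun₂ h x y)
  Fintype.ofFinite _

namespace Dihom

def IsDihom {α X : Type*} (P : α → α → Prop) (E : X → X → Prop) (h : α → X) : Prop :=
  ∀ a b, P a b → E (h a) (h b)

theorem diAcyclic_of_graded {α β : Type*} [Preorder β] {P : α → α → Prop} (ρ : α → β)
    (hP : ∀ a b, P a b → ρ a < ρ b) : DiAcyclic P := by
  rintro ⟨a, ha⟩
  have hlt : Relation.TransGen (· < ·) (ρ a) (ρ a) := Relation.TransGen.lift ρ hP _ _ ha
  rw [Relation.transGen_eq_self] at hlt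
  exact lt_irrefl _ hlt

theorem dihomCount_equiv {α α' X : Type*} (e : α ≃ α') (P : α → α → Prop) (E : X → X → Prop) :
    dihomCount P E = dihomCount (fun a b => P (e.symm a) (e.symm b)) E :=
  Nat.card_congr <| (Equiv.arrowCongr e (.refl X)).subtypeEquiv fun h => by
    simp [← e.forall_congr_right, Equiv.arrowCongr_apply]

section Levels

variable {σ β X : Type*} (ρ : σ → β) (P : σ → σ → Prop) (E : X → X → Prop)

def levelKer (h : σ → X) : Setoid σ :=
  Setoid.ker fun x => (ρ x, h x)

noncomputable def levelInjCount : ℕ :=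
  Nat.card {h : σ → X // IsDihom P E h ∧ Injective fun x => (ρ x, h x)}

noncomputable def levelKerCount (θ : Setoid σ) : ℕ :=
  Nat.card {h : σ → X // IsDihom P E h ∧ levelKer ρ h = θ}

theorem dihomCount_eq_sum_levelKerCount [Finite σ] [Finite X] :
    dihomCount P E = ∑ θ, levelKerCount ρ P E θ := by
  unfold levelKerCount
  rw [← Nat.card_sigma]
  exact Nat.card_congr <|
    (Equiv.sigmaFiberEquiv fun h : {h // IsDihom P E h} => levelKer ρ h.1).symm.trans <|
      Equiv.sigmaCongrRight fun θ =>
        Equiv.subtypeSubtypeEquivSubtypeInter _ (fun h => levelKer ρ h = θ)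

theorem levelKerCount_bot : levelKerCount ρ P E ⊥ = levelInjCount ρ P E := by
  simp only [levelKerCount, levelInjCount, levelKer, Setoid.ker_eq_bot_iff]

theorem levelKerCount_eq_zero {θ : Setoid σ} (hθ : ¬θ ≤ Setoid.ker ρ) :
    levelKerCount ρ P E θ = 0 :=
  Nat.card_eq_zero.mpr <| .inl ⟨fun h => hθ <| h.2.2 ▸ fun _ _ hxy => congrArg Prod.fst hxy⟩

theorem ker_comp_mk_eq_iff {θ : Setoid σ} {Y : Type*} (F : Quotient θ → Y) :
    Setoid.ker (F ∘ Quotient.mk θ) = θ ↔ Injective F := by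
  constructor
  · rintro hF ⟨x⟩ ⟨y⟩ hxy
    have hxy' : Setoid.ker (F ∘ Quotient.mk θ) x y := hxy
    rw [hF] at hxy'
    exact Quotient.sound hxy'
  · intro hF
    ext x y
    exact hF.eq_iff.trans Quotient.eq

theorem isDihom_map_iff {τ : Type*} (f : σ → τ) (g : τ → X) :
    IsDihom (Relation.Map P f f) E g ↔ IsDihom P E (g ∘ f) := by
  constructor
  · exact fun hg a b hab => hg _ _ ⟨a, b, hab, rfl, rfl⟩
  · rintro hg _ _ ⟨a, b, hab, rfl, rfl⟩
    exact hg a b hab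

theorem levelKerCount_eq_levelInjCount_quotient {θ : Setoid σ} (hθ : θ ≤ Setoid.ker ρ) :
    levelKerCount ρ P E θ =
      levelInjCount (Quotient.lift ρ hθ) (Relation.Map P (Quotient.mk θ) (Quotient.mk θ)) E := by
  refine Nat.card_congr <| (Equiv.subtypeSubtypeEquivSubtype ?_).symm.trans <|
    (Setoid.liftEquiv θ).subtypeEquiv fun h => ?_
  · exact fun {h} hh => hh.2 ▸ fun x y hxy => congrArg Prod.snd hxy
  · rw [isDihom_map_iff, ← ker_comp_mk_eq_iff]
    rfl

theorem lift_lt_of_map [Preorder β] {θ : Setoid σ} (hθ : θ ≤ Setoid.ker ρ)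
    (hP : ∀ a b, P a b → ρ a < ρ b) {u v : Quotient θ}
    (huv : Relation.Map P (Quotient.mk θ) (Quotient.mk θ) u v) :
    Quotient.lift ρ hθ u < Quotient.lift ρ hθ v := by
  obtain ⟨a, b, hab, rfl, rfl⟩ := huv
  exact hP a b hab

theorem card_quotient_lt [Finite σ] {θ : Setoid σ} (hθ : θ ≠ ⊥) :
    Nat.card (Quotient θ) < Nat.card σ := by
  have := Fintype.ofFinite σ
  classical
  rw [Nat.card_eq_fintype_card, Nat.card_eq_fintype_card]
  refine Fintype.card_lt_of_surjective_not_injective _ Quotient.mk_surjective fun h => hθ ?_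
  rwa [← Setoid.ker_mk_eq θ, Setoid.ker_eq_bot_iff]

end Levels

variable {V W : Type*} {EG : V → V → Prop} {EH : W → W → Prop}

theorem dihomCount_eq_of_iso (f : V ≃ W) (hf : ∀ u u', EG u u' ↔ EH (f u) (f u'))
    {α : Type*} (P : α → α → Prop) : dihomCount P EG = dihomCount P EH :=
  Nat.card_congr <| (Equiv.arrowCongr (.refl α) f).subtypeEquiv fun h => by
    simp [hf]

def edgeMap (f : V → W) (hf : IsDihom EG EH f) :
    {p : V × V // EG p.1 p.2} → {p : W × W // EH p.1 p.2} :=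
  Subtype.map (Prod.map f f) fun _ hp => hf _ _ hp

theorem edgeMap_injective {f : V → W} (hf : Injective f) (hfE : IsDihom EG EH f) :
    Injective (edgeMap f hfE) :=
  Subtype.map_injective _ (hf.prodMap hf)

theorem exists_iso_of_injective_isDihom [Finite V] [Finite W] {f : V → W} {g : W → V}
    (hf : Injective f) (hfE : IsDihom EG EH f) (hg : Injective g) (hgE : IsDihom EH EG g) :
    ∃ e : V ≃ W, ∀ u u', EG u u' ↔ EH (e u) (e u') := by
  have hbij : Bijective f := hf.bijective_of_nat_card_le (Nat.card_le_card_of_injective g hg)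
  have hsurj := ((edgeMap_injective hf hfE).bijective_of_nat_card_le
    (Nat.card_le_card_of_injective _ (edgeMap_injective hg hgE))).2
  refine ⟨Equiv.ofBijective f hbij, fun u u' => ⟨hfE u u', fun huu' => ?_⟩⟩
  obtain ⟨⟨⟨a, b⟩, hab⟩, heq⟩ := hsurj ⟨(f u, f u'), huu'⟩
  obtain ⟨ha, hb⟩ := Prod.mk.inj (congrArg Subtype.val heq)
  rwa [← hf ha, ← hf hb]

def layered (M : ℕ) (E : V → V → Prop) (x y : Fin M × V) : Prop :=
  x.1 < y.1 ∧ E x.2 y.2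

theorem levelInjCount_layered_pos [Finite V] (M : ℕ) :
    0 < levelInjCount Prod.fst (layered M EG) EG :=
  Nat.card_pos_iff.mpr ⟨⟨⟨Prod.snd, fun _ _ h => h.2, fun _ _ h => h⟩⟩, inferInstance⟩

theorem exists_injective_isDihom_of_layered [Finite V] [Finite W] {M : ℕ}
    (hM : Nat.card (V → W) < M) {h : Fin M × V → W} (hE : IsDihom (layered M EG) EH h)
    (hinj : Injective fun x => (x.1, h x)) : ∃ f : V → W, Injective f ∧ IsDihom EG EH f := by
  let slice (i : Fin M) (v : V) : W := h (i, v)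
  have hslice : ¬Injective slice := fun hs => by
    simpa using (Nat.card_le_card_of_injective slice hs).trans_lt hM
  obtain ⟨i, j, hij, heq⟩ : ∃ i j, i < j ∧ slice i = slice j := by
    obtain ⟨i, j, heq, hne⟩ := Function.not_injective_iff.mp hslice
    rcases hne.lt_or_gt with hlt | hlt
    exacts [⟨i, j, hlt, heq⟩, ⟨j, i, hlt, heq.symm⟩]
  refine ⟨slice i, fun u v huv => ?_, fun u v huv => ?_⟩
  · simpa using hinj (Prod.ext rfl huv : ((i, u).1, h (i, u)) = ((i, v).1, h (i, v)))
  · rw [heq]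
    nth_rw 1 [← heq]
    exact hE (i, u) (j, v) ⟨hij, huv⟩

section DagIndistinguishable

variable (hyp : ∀ (n : ℕ) (F : Fin n → Fin n → Prop), DiAcyclic F →
  dihomCount F EG = dihomCount F EH)
include hyp

theorem dihomCount_eq_of_graded {σ β : Type*} [Finite σ] [Preorder β] (ρ : σ → β)
    {P : σ → σ → Prop} (hP : ∀ a b, P a b → ρ a < ρ b) : dihomCount P EG = dihomCount P EH := by
  let e := Finite.equivFin σ
  rw [dihomCount_equiv e, dihomCount_equiv e]
  exact hyp _ _ <| diAcyclic_of_graded (ρ ∘ e.symm) fun _ _ h => hP _ _ h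

theorem levelInjCount_eq [Finite V] [Finite W] {σ β : Type*} [Finite σ] [Preorder β]
    (ρ : σ → β) (P : σ → σ → Prop) (hP : ∀ a b, P a b → ρ a < ρ b) :
    levelInjCount ρ P EG = levelInjCount ρ P EH := by
  induction hn : Nat.card σ using Nat.strong_induction_on generalizing σ with
  | _ n ih =>
  have hne : ∀ θ ≠ ⊥, levelKerCount ρ P EG θ = levelKerCount ρ P EH θ := by
    intro θ hθ
    by_cases hle : θ ≤ Setoid.ker ρ
    · rw [levelKerCount_eq_levelInjCount_quotient _ _ _ hle,
        levelKerCount_eq_levelInjCount_quotient _ _ _ hle]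
      exact ih _ (hn ▸ card_quotient_lt hθ) _ _ (fun _ _ => lift_lt_of_map ρ P hle hP) rfl
    · rw [levelKerCount_eq_zero _ _ _ hle, levelKerCount_eq_zero _ _ _ hle]
  classical
  have hsum := dihomCount_eq_of_graded hyp ρ hP
  rw [dihomCount_eq_sum_levelKerCount ρ, dihomCount_eq_sum_levelKerCount ρ,
    ← Finset.add_sum_erase _ _ (Finset.mem_univ ⊥), ← Finset.add_sum_erase _ _ (Finset.mem_univ ⊥),
    Finset.sum_congr rfl fun θ hθ => hne θ (Finset.ne_of_mem_erase hθ)] at hsum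
  rw [← levelKerCount_bot, ← levelKerCount_bot]
  exact Nat.add_right_cancel hsum

theorem exists_injective_isDihom [Finite V] [Finite W] :
    ∃ f : V → W, Injective f ∧ IsDihom EG EH f := by
  let M := Nat.card (V → W) + 1
  have hpos : 0 < levelInjCount Prod.fst (layered M EG) EH :=
    levelInjCount_eq hyp Prod.fst (layered M EG) (fun _ _ h => h.1) ▸ levelInjCount_layered_pos M
  obtain ⟨⟨h, hE, hinj⟩⟩ := (Nat.card_pos_iff.mp hpos).1
  exact exists_injective_isDihom_of_layered (Nat.lt_succ_self _) hE hinj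

end DagIndistinguishable

end Dihom

/-- **Lovász (1971).** Two finite directed graphs `G = (V, E_G)` and `H = (W, E_H)` admit the
same number of homomorphisms from every finite directed acyclic graph if and only if they are
isomorphic. -/
theorem dihomCount_dag_eq_iff_iso {V W : Type*} [Fintype V] [Fintype W]
    (EG : V → V → Prop) (EH : W → W → Prop) :
    (∀ (n : ℕ) (F : Fin n → Fin n → Prop), DiAcyclic F →
        dihomCount F EG = dihomCount F EH) ↔
      ∃ f : V ≃ W, ∀ u u' : V, EG u u' ↔ EH (f u) (f u') := by
  refine ⟨fun hyp => ?_, fun ⟨f, hf⟩ _ F _ => Dihom.dihomCount_eq_of_iso f hf F⟩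
  obtain ⟨f, hf, hfE⟩ := Dihom.exists_injective_isDihom hyp
  obtain ⟨g, hg, hgE⟩ := Dihom.exists_injective_isDihom fun n F hF => (hyp n F hF).symm
  exact Dihom.exists_iso_of_injective_isDihom hf hfE hg hgE
end
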